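/- Let O_ξ(x) = 2⟨x,ξ⟩y_ξ - x be the Lorentz reflection associated with a spacelike vector ξ (as constructed via y_ξ). Then O_ξ maps future-oriented causal vectors to past-oriented causal vectors: for any causal x (γ(x) ≥ 0, x ≠ 0, with γ(x) = x₀² - ‖x_r‖²), sign((O_ξ x)₀) = -sign(x₀). Key argument: the midpoint (x + O_ξ(x))/2 = ⟨x,ξ⟩ y_ξ is spacelike, and each solid light cone is convex. -/
import Mathlib


/-- The Minkowski quadratic form `γ(x) = x₀² - Σ_{i≠0} xᵢ²` on `ℝ^d`. -/
def minkGamma {d : ℕ} [NeZero d] (x : Fin d → ℝ) : ℝ :=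
  (x 0) ^ 2 - ∑ i ∈ Finset.univ.filter (fun i : Fin d => i ≠ 0), (x i) ^ 2

/-- The Euclidean inner product on `ℝ^d`. -/
def eucInner {d : ℕ} (x y : Fin d → ℝ) : ℝ := ∑ i, x i * y i

/-- A causal vector with vanishing time component is zero. -/
lemma mink_time_zero {d : ℕ} [NeZero d] (x : Fin d → ℝ) (hx : 0 ≤ minkGamma x)
    (h0 : x 0 = 0) : x = 0 := by
  unfold minkGamma at hx
  rw [h0] at hx
  have hnn : ∀ i ∈ Finset.univ.filter (fun i : Fin d => i ≠ 0), 0 ≤ (x i) ^ 2 :=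
    fun i _ => sq_nonneg _
  have hsum : ∑ i ∈ Finset.univ.filter (fun i : Fin d => i ≠ 0), (x i) ^ 2 = 0 := by
    have h1 : 0 ≤ ∑ i ∈ Finset.univ.filter (fun i : Fin d => i ≠ 0), (x i) ^ 2 :=
      Finset.sum_nonneg hnn
    nlinarith
  funext i
  by_cases hi : i = 0
  · rw [hi]; simpa using h0
  · have := (Finset.sum_eq_zero_iff_of_nonneg hnn).mp hsum i (by simp [hi])
    simpa using pow_eq_zero_iff (n := 2) (by norm_num) |>.mp this

lemma minkGamma_neg {d : ℕ} [NeZero d] (x : Fin d → ℝ) :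
    minkGamma (-x) = minkGamma x := by
  unfold minkGamma; simp

lemma minkGamma_smul {d : ℕ} [NeZero d] (c : ℝ) (y : Fin d → ℝ) :
    minkGamma (c • y) = c ^ 2 * minkGamma y := by
  unfold minkGamma
  simp only [Pi.smul_apply, smul_eq_mul, mul_pow]
  rw [← Finset.mul_sum]
  ring

/-- Convexity of the forward solid light cone. -/
lemma mink_add_nonneg {d : ℕ} [NeZero d] (x z : Fin d → ℝ)
    (hx : 0 ≤ minkGamma x) (hz : 0 ≤ minkGamma z)
    (hx0 : 0 < x 0) (hz0 : 0 < z 0) : 0 ≤ minkGamma (x + z) := by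
  set F := Finset.univ.filter (fun i : Fin d => i ≠ 0) with hF
  have hexp : minkGamma (x + z)
      = minkGamma x + minkGamma z + 2 * (x 0 * z 0 - ∑ i ∈ F, x i * z i) := by
    unfold minkGamma
    simp only [Pi.add_apply]
    have h1 : ∑ i ∈ F, (x i + z i) ^ 2
        = ∑ i ∈ F, ((x i) ^ 2 + (z i) ^ 2 + 2 * (x i * z i)) :=
      Finset.sum_congr rfl fun i _ => by ring
    rw [h1, Finset.sum_add_distrib, Finset.sum_add_distrib, ← Finset.mul_sum]
    ring
  have hcs : (∑ i ∈ F, x i * z i) ^ 2 ≤ (∑ i ∈ F, (x i) ^ 2) * ∑ i ∈ F, (z i) ^ 2 :=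
    Finset.sum_mul_sq_le_sq_mul_sq F x z
  have hxb : ∑ i ∈ F, (x i) ^ 2 ≤ (x 0) ^ 2 := by unfold minkGamma at hx; linarith
  have hzb : ∑ i ∈ F, (z i) ^ 2 ≤ (z 0) ^ 2 := by unfold minkGamma at hz; linarith
  have hxnn : 0 ≤ ∑ i ∈ F, (x i) ^ 2 := Finset.sum_nonneg fun i _ => sq_nonneg _
  have hznn : 0 ≤ ∑ i ∈ F, (z i) ^ 2 := Finset.sum_nonneg fun i _ => sq_nonneg _
  have hAB : (∑ i ∈ F, (x i) ^ 2) * ∑ i ∈ F, (z i) ^ 2 ≤ (x 0) ^ 2 * (z 0) ^ 2 :=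
    mul_le_mul hxb hzb hznn (sq_nonneg _)
  have h2 : (∑ i ∈ F, x i * z i) ^ 2 ≤ (x 0 * z 0) ^ 2 := by nlinarith
  have hkey : ∑ i ∈ F, x i * z i ≤ x 0 * z 0 := by nlinarith [mul_pos hx0 hz0]
  linarith [hexp]

/-- The Lorentz reflection `O_ξ(x) = 2⟨x,ξ⟩ y_ξ - x` associated with a spacelike `ξ`
(with `y_ξ` spacelike, `⟨y_ξ,ξ⟩ = 1`, and `O_ξ` preserving `γ`) maps future-oriented
causal vectors to past-oriented ones: for causal `x` (`γ(x) ≥ 0`, `x ≠ 0`) we have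
`sign((O_ξ x)₀) = -sign(x₀)`. -/
theorem reflection_flips_time_orientation {d : ℕ} [NeZero d] (ξ y : Fin d → ℝ)
    (hξ : minkGamma ξ < 0) (hy : minkGamma y < 0) (hyξ : eucInner y ξ = 1)
    (O : (Fin d → ℝ) → (Fin d → ℝ))
    (hO : ∀ x, O x = (2 * eucInner x ξ) • y - x)
    (hpres : ∀ x, minkGamma (O x) = minkGamma x) :
    ∀ x : Fin d → ℝ, 0 ≤ minkGamma x → x ≠ 0 →
      Real.sign ((O x) 0) = - Real.sign (x 0) := by
  intro x hcaus hne
  set c : ℝ := eucInner x ξ with hc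
  by_cases hc0 : c = 0
  · -- then O x = -x and the claim is immediate
    have : O x 0 = -(x 0) := by rw [hO x, ← hc, hc0]; simp
    rw [this, Real.sign_neg]
  · -- x 0 ≠ 0
    have hx0 : x 0 ≠ 0 := fun h => hne (mink_time_zero x hcaus h)
    -- O x ≠ 0
    have hsum : x + O x = (2 * c) • y := by rw [hO x, ← hc]; abel
    have hOne : O x ≠ 0 := by
      intro h
      have hxeq : x = (2 * c) • y := by rw [← hsum, h]; simp
      have : minkGamma x = (2 * c) ^ 2 * minkGamma y := by rw [hxeq, minkGamma_smul]
      have hcp : (0:ℝ) < (2 * c) ^ 2 := by positivity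
      nlinarith [mul_neg_of_pos_of_neg hcp hy]
    have hOcaus : 0 ≤ minkGamma (O x) := (hpres x).symm ▸ hcaus
    have hO0 : O x 0 ≠ 0 := fun h => hOne (mink_time_zero (O x) hOcaus h)
    -- the midpoint direction is spacelike
    have hmid : minkGamma ((2 * c) • y) < 0 := by
      rw [minkGamma_smul]
      have : (0:ℝ) < (2 * c) ^ 2 := by positivity
      nlinarith
    -- signs must be opposite
    have hopp : ¬ (0 < x 0 ∧ 0 < O x 0) := by
      rintro ⟨h1, h2⟩
      have := mink_add_nonneg x (O x) hcaus hOcaus h1 h2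
      rw [hsum] at this
      linarith
    have hopp' : ¬ (x 0 < 0 ∧ O x 0 < 0) := by
      rintro ⟨h1, h2⟩
      have := mink_add_nonneg (-x) (-(O x)) (by rw [minkGamma_neg]; exact hcaus)
        (by rw [minkGamma_neg]; exact hOcaus) (by simpa using h1) (by simpa using h2)
      have heq : (-x) + (-(O x)) = -((2 * c) • y) := by rw [← hsum]; abel
      rw [heq, minkGamma_neg] at this
      linarith
    rcases lt_or_gt_of_ne hx0 with h | h
    · have h2 : 0 < O x 0 := by
        rcases lt_or_gt_of_ne hO0 with h' | h'
        · exact absurd ⟨h, h'⟩ hopp'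
        · exact h'
      rw [Real.sign_of_pos h2, Real.sign_of_neg h]; ring
    · have h2 : O x 0 < 0 := by
        rcases lt_or_gt_of_ne hO0 with h' | h'
        · exact h'
        · exact absurd ⟨h, h'⟩ hopp
      rw [Real.sign_of_neg h2, Real.sign_of_pos h]
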